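/- For the warped-product Laplacian Δ = ∂_r* ∂_r + r^{-2} Δ_Y and commutant A_F = (1/2)(F(r)∂_r - ∂_r* F(r)), the difference [Δ, A_F] - (2 ∂_r* F'(r) ∂_r + 2 r^{-3} F(r) Δ_Y) is an operator of order zero (a multiplication operator), equal to the function -(1/2) Δ(∂_r*(F(r))) obtained by applying [Δ, A_F] minus the second-order part to the constant function 1. -/

import Mathlib

open scoped ContDiff

/-- Partial derivative in the radial variable. -/
noncomputable def pd {Y : Type*} (f : ℝ → Y → ℝ) (r : ℝ) (y : Y) : ℝ :=
  deriv (fun s => f s y) r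

/-- `∂_r^* = -∂_r - (n-1)/r`, the formal adjoint of `∂_r` in `L²(r^{n-1} dr dvol_h)`. -/
noncomputable def Dstar {Y : Type*} (n : ℝ) (f : ℝ → Y → ℝ) (r : ℝ) (y : Y) : ℝ :=
  -(pd f r y) - ((n - 1)/r) * f r y

/-- The warped-product (nonnegative) Laplacian `Δ = ∂_r^* ∂_r + r^{-2} Δ_Y`. -/
noncomputable def Lap {Y : Type*} (n : ℝ) (ΔY : (Y → ℝ) →ₗ[ℝ] (Y → ℝ))
    (u : ℝ → Y → ℝ) (r : ℝ) (y : Y) : ℝ :=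
  Dstar n (pd u) r y + (r^2)⁻¹ * ΔY (fun y' => u r y') y

/-- The Morawetz commutant `A_F = (1/2)(F(r)∂_r - ∂_r^* F(r))`. -/
noncomputable def AF {Y : Type*} (n : ℝ) (F : ℝ → ℝ) (u : ℝ → Y → ℝ)
    (r : ℝ) (y : Y) : ℝ :=
  (1/2) * (F r * pd u r y - Dstar n (fun s y' => F s * u s y') r y)

/-- The second order part `2 ∂_r^* F'(r) ∂_r + 2 r^{-3} F(r) Δ_Y`. -/
noncomputable def SecOrd {Y : Type*} (n : ℝ) (ΔY : (Y → ℝ) →ₗ[ℝ] (Y → ℝ))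
    (F : ℝ → ℝ) (u : ℝ → Y → ℝ) (r : ℝ) (y : Y) : ℝ :=
  2 * Dstar n (fun s y' => deriv F s * pd u s y') r y
    + 2 * (r^3)⁻¹ * F r * ΔY (fun y' => u r y') y

/-- The radial function `∂_r^*(F(r)) = -F'(r) - ((n-1)/r) F(r)`. -/
noncomputable def crad (n : ℝ) (F : ℝ → ℝ) (r : ℝ) : ℝ :=
  -(deriv F r) - ((n - 1)/r) * F r

/-- The Laplacian on radial functions: `Δc = -c'' - ((n-1)/r) c'`. -/
noncomputable def LapRad (n : ℝ) (c : ℝ → ℝ) (r : ℝ) : ℝ :=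
  -(deriv (deriv c) r) - ((n - 1)/r) * deriv c r


/-- Derivative of a `C^⊤` function exists. -/
lemma hdtop {f : ℝ → ℝ} (hf : ContDiff ℝ (⊤ : ℕ∞) f) (t : ℝ) : HasDerivAt f (deriv f t) t :=
  (hf.differentiable (by simp) t).hasDerivAt

/-- The derivative of a `C^⊤` function is `C^⊤`. -/
lemma cderiv {f : ℝ → ℝ} (hf : ContDiff ℝ (⊤ : ℕ∞) f) : ContDiff ℝ (⊤ : ℕ∞) (deriv f) := by
  exact (contDiff_infty_iff_deriv.mp hf).2

/-- Simplified form of the radial part of `A_F u`. -/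
noncomputable def Afn (n : ℝ) (F W : ℝ → ℝ) : ℝ → ℝ := fun t =>
  F t * deriv W t + ((1/2) * deriv F t + (1/2) * ((n - 1) * t⁻¹ * F t)) * W t

/-- First derivative of `Afn`. -/
noncomputable def A1 (n : ℝ) (F W : ℝ → ℝ) : ℝ → ℝ := fun t =>
  deriv F t * deriv W t + F t * deriv (deriv W) t
    + (((1/2) * deriv (deriv F) t
        - (1/2) * (n - 1) * (t^2)⁻¹ * F t + (1/2) * (n - 1) * t⁻¹ * deriv F t) * W t
      + ((1/2) * deriv F t + (1/2) * ((n - 1) * t⁻¹ * F t)) * deriv W t)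

lemma deriv_Afn (n : ℝ) {F W : ℝ → ℝ} (hF : ContDiff ℝ (⊤ : ℕ∞) F) (hW : ContDiff ℝ (⊤ : ℕ∞) W)
    {t : ℝ} (ht : t ≠ 0) : deriv (Afn n F W) t = A1 n F W t := by
  have h := (((hdtop hF t).mul (hdtop (cderiv hW) t)).add
    ((((hdtop (cderiv hF) t).const_mul ((1:ℝ)/2)).add
      ((((hasDerivAt_inv ht).const_mul (n - 1)).mul (hdtop hF t)).const_mul ((1:ℝ)/2))).mul
      (hdtop hW t))).deriv
  exact h.trans (by unfold A1; simp only [Pi.add_apply, Pi.mul_apply]; ring)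

lemma deriv2_Afn (n : ℝ) {F W : ℝ → ℝ} (hF : ContDiff ℝ (⊤ : ℕ∞) F) (hW : ContDiff ℝ (⊤ : ℕ∞) W)
    {r : ℝ} (hr : r ≠ 0) : deriv (deriv (Afn n F W)) r = deriv (A1 n F W) r := by
  have hev : deriv (Afn n F W) =ᶠ[nhds r] A1 n F W := by
    filter_upwards [eventually_ne_nhds hr] with t ht using deriv_Afn n hF hW ht
  exact hev.deriv_eq

lemma deriv_A1 (n : ℝ) {F W : ℝ → ℝ} (hF : ContDiff ℝ (⊤ : ℕ∞) F) (hW : ContDiff ℝ (⊤ : ℕ∞) W)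
    {r : ℝ} (hr : r ≠ 0) :
    deriv (A1 n F W) r =
      F r * deriv (deriv (deriv W)) r
      + (5/2) * deriv F r * deriv (deriv W) r + (1/2) * (n-1) * r⁻¹ * F r * deriv (deriv W) r
      + 2 * deriv (deriv F) r * deriv W r
      + (n-1) * (r⁻¹ * deriv F r - (r^2)⁻¹ * F r) * deriv W r
      + (1/2) * deriv (deriv (deriv F)) r * W r
      + (n-1) * ((r^3)⁻¹ * F r - (r^2)⁻¹ * deriv F r + (1/2) * r⁻¹ * deriv (deriv F) r) * W r := by
  have hinv := hasDerivAt_inv hr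
  have hinv2 := (hasDerivAt_pow 2 r).inv (pow_ne_zero 2 hr)
  have hFd := hdtop hF r
  have hF1d := hdtop (cderiv hF) r
  have hF2d := hdtop (cderiv (cderiv hF)) r
  have hWd := hdtop hW r
  have hW1d := hdtop (cderiv hW) r
  have hW2d := hdtop (cderiv (cderiv hW)) r
  have h := (((hF1d.mul hW1d).add (hFd.mul hW2d)).add
    (((((hF2d.const_mul ((1:ℝ)/2)).sub
          ((hinv2.const_mul ((1:ℝ)/2 * (n-1))).mul hFd)).add
        ((hinv.const_mul ((1:ℝ)/2 * (n-1))).mul hF1d)).mul hWd).add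
      ((((hF1d.const_mul ((1:ℝ)/2)).add
        (((hinv.const_mul (n-1)).mul hFd).const_mul ((1:ℝ)/2))).mul hW1d)))).deriv
  exact h.trans (by norm_num; field_simp; ring)

/-- First derivative of `crad`. -/
noncomputable def C1 (n : ℝ) (F : ℝ → ℝ) : ℝ → ℝ := fun t =>
  -(deriv (deriv F) t) + (n - 1) * (t^2)⁻¹ * F t - (n - 1) * t⁻¹ * deriv F t

lemma deriv_crad (n : ℝ) {F : ℝ → ℝ} (hF : ContDiff ℝ (⊤ : ℕ∞) F)
    {t : ℝ} (ht : t ≠ 0) : deriv (crad n F) t = C1 n F t := by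
  have h := (((hdtop (cderiv hF) t).neg).sub
    (((hasDerivAt_inv ht).const_mul (n - 1)).mul (hdtop hF t))).deriv
  exact h.trans (by unfold C1; ring)

lemma deriv2_crad (n : ℝ) {F : ℝ → ℝ} (hF : ContDiff ℝ (⊤ : ℕ∞) F)
    {r : ℝ} (hr : r ≠ 0) : deriv (deriv (crad n F)) r = deriv (C1 n F) r := by
  have hev : deriv (crad n F) =ᶠ[nhds r] C1 n F := by
    filter_upwards [eventually_ne_nhds hr] with t ht using deriv_crad n hF ht
  exact hev.deriv_eq

lemma deriv_C1 (n : ℝ) {F : ℝ → ℝ} (hF : ContDiff ℝ (⊤ : ℕ∞) F)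
    {r : ℝ} (hr : r ≠ 0) :
    deriv (C1 n F) r = -(deriv (deriv (deriv F)) r)
      - (n-1) * (2 * (r^3)⁻¹ * F r - 2 * (r^2)⁻¹ * deriv F r + r⁻¹ * deriv (deriv F) r) := by
  have hinv := hasDerivAt_inv hr
  have hinv2 := (hasDerivAt_pow 2 r).inv (pow_ne_zero 2 hr)
  have h := ((((hdtop (cderiv (cderiv hF)) r).neg).add
      ((hinv2.const_mul (n - 1)).mul (hdtop hF r))).sub
      ((hinv.const_mul (n - 1)).mul (hdtop (cderiv hF) r))).deriv
  exact h.trans (by norm_num; field_simp; ring)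

set_option maxHeartbeats 2000000 in
/-- Key commutator computation preceding (3.3): for the warped-product
Laplacian `Δ = ∂_r^* ∂_r + r^{-2} Δ_Y` and the commutant
`A_F = (1/2)(F(r)∂_r - ∂_r^* F(r))`, the difference
`[Δ, A_F] - (2 ∂_r^* F'(r) ∂_r + 2 r^{-3} F(r) Δ_Y)` is a multiplication
operator, equal to multiplication by `-(1/2) Δ(∂_r^*(F(r)))`. -/
theorem stmt9 {Y : Type*} (n : ℝ) (ΔY : (Y → ℝ) →ₗ[ℝ] (Y → ℝ)) (F : ℝ → ℝ)
    (hF : ContDiff ℝ (⊤ : ℕ∞) F)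
    (hconst : ∀ c : ℝ, ΔY (fun _ => c) = fun _ => 0)
    (hswap : ∀ w : ℝ → Y → ℝ, (∀ y, ContDiff ℝ (⊤ : ℕ∞) (fun r => w r y)) →
      ∀ r y, deriv (fun s => ΔY (w s) y) r = ΔY (fun y' => pd w r y') y)
    (hsm : ∀ w : ℝ → Y → ℝ, (∀ y, ContDiff ℝ (⊤ : ℕ∞) (fun r => w r y)) →
      ∀ y, ContDiff ℝ (⊤ : ℕ∞) (fun r => ΔY (w r) y)) :
    ∀ u : ℝ → Y → ℝ, (∀ y, ContDiff ℝ (⊤ : ℕ∞) (fun r => u r y)) →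
      ∀ r : ℝ, 0 < r → ∀ y : Y,
        (Lap n ΔY (AF n F u) r y - AF n F (Lap n ΔY u) r y) - SecOrd n ΔY F u r y
          = (-(1/2) * LapRad n (crad n F) r) * u r y := by
  intro u hu r hr y
  have hr0 : r ≠ 0 := ne_of_gt hr
  -- general simplification of `AF`
  have hAFsimp : ∀ (v : ℝ → Y → ℝ) (s : ℝ) (y' : Y), DifferentiableAt ℝ (fun t => v t y') s →
      AF n F v s y' = F s * deriv (fun t => v t y') s
        + ((1/2) * deriv F s + (1/2) * ((n - 1)/s) * F s) * v s y' := by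
    intro v s y' hv
    have hd : deriv (fun t => F t * v t y') s
        = deriv F s * v s y' + F s * deriv (fun t => v t y') s :=
      ((hdtop hF s).mul hv.hasDerivAt).deriv
    show (1/2) * (F s * deriv (fun t => v t y') s
        - (-(deriv (fun t => F t * v t y') s) - ((n - 1)/s) * (F s * v s y'))) = _
    rw [hd]; ring
  -- radial form of `AF u`
  have hAFW : (fun s => AF n F u s y) = Afn n F (fun s => u s y) := by
    funext s
    rw [hAFsimp u s y ((hu y).differentiable (by simp) s)]
    simp only [Afn]
    ring
  -- `ΔY` of `AF u` via linearity
  have hAFy : ∀ y' : Y, AF n F u r y' = F r * pd u r y'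
      + ((1/2) * deriv F r + (1/2) * ((n - 1)/r) * F r) * u r y' := by
    intro y'
    exact hAFsimp u r y' ((hu y').differentiable (by simp) r)
  have hlin : ΔY (fun y' => AF n F u r y') y
      = F r * ΔY (fun y' => pd u r y') y
        + ((1/2) * deriv F r + (1/2) * ((n - 1)/r) * F r) * ΔY (fun y' => u r y') y := by
    have e : (fun y' => AF n F u r y')
        = F r • (fun y' => pd u r y')
          + ((1/2) * deriv F r + (1/2) * ((n - 1)/r) * F r) • (fun y' => u r y') := by
      funext y'
      simp only [Pi.add_apply, Pi.smul_apply, smul_eq_mul]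
      exact hAFy y'
    rw [e, map_add, map_smul, map_smul]
    simp [smul_eq_mul]
  -- derivative of `s ↦ ΔY (u s) y`
  have hDd : HasDerivAt (fun s => ΔY (fun y' => u s y') y) (ΔY (fun y' => pd u r y') y) r := by
    have hDd0 : HasDerivAt (fun s => ΔY (u s) y) (deriv (fun s => ΔY (u s) y) r) r :=
      ((hsm u hu y).differentiable (by simp) r).hasDerivAt
    rw [hswap u hu r y] at hDd0
    exact hDd0
  -- derivative of the radial form of `Lap u`
  have hLfd := (((hdtop (cderiv (cderiv (hu y))) r).neg).sub
      (((hasDerivAt_inv hr0).const_mul (n-1)).mul (hdtop (cderiv (hu y)) r))).add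
      (((hasDerivAt_pow 2 r).inv (pow_ne_zero 2 hr0)).mul hDd)
  have hLdiff : DifferentiableAt ℝ (fun t => Lap n ΔY u t y) r := hLfd.differentiableAt
  have hLd : deriv (fun t => Lap n ΔY u t y) r
      = -(deriv (deriv (deriv (fun s => u s y))) r)
        + (n-1) * (r^2)⁻¹ * deriv (fun s => u s y) r
        - (n-1) * r⁻¹ * deriv (deriv (fun s => u s y)) r
        - 2 * (r^3)⁻¹ * ΔY (fun y' => u r y') y
        + (r^2)⁻¹ * ΔY (fun y' => pd u r y') y :=
    hLfd.deriv.trans (by norm_num; field_simp; ring)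
  have hLr : Lap n ΔY u r y = -(deriv (deriv (fun s => u s y)) r)
      - ((n - 1)/r) * deriv (fun s => u s y) r + (r^2)⁻¹ * ΔY (fun y' => u r y') y := rfl
  -- SecOrd
  have hd2 : deriv (fun t => deriv F t * deriv (fun s => u s y) t) r
      = deriv (deriv F) r * deriv (fun s => u s y) r
        + deriv F r * deriv (deriv (fun s => u s y)) r :=
    ((hdtop (cderiv hF) r).mul (hdtop (cderiv (hu y)) r)).deriv
  have hSec : SecOrd n ΔY F u r y
      = 2 * (-(deriv (deriv F) r * deriv (fun s => u s y) r
            + deriv F r * deriv (deriv (fun s => u s y)) r)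
          - ((n - 1)/r) * (deriv F r * deriv (fun s => u s y) r))
        + 2 * (r^3)⁻¹ * F r * ΔY (fun y' => u r y') y := by
    show 2 * (-(deriv (fun t => deriv F t * deriv (fun s => u s y) t) r)
        - ((n - 1)/r) * (deriv F r * deriv (fun s => u s y) r))
      + 2 * (r^3)⁻¹ * F r * ΔY (fun y' => u r y') y = _
    rw [hd2]
  -- unfolding `Lap (AF u)`
  have e0 : Lap n ΔY (AF n F u) r y
      = -(deriv (deriv (fun s => AF n F u s y)) r)
        - ((n - 1)/r) * deriv (fun s => AF n F u s y) r
        + (r^2)⁻¹ * ΔY (fun y' => AF n F u r y') y := rfl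
  -- RHS
  have hLR : LapRad n (crad n F) r = -(deriv (C1 n F) r) - ((n - 1)/r) * C1 n F r := by
    show -(deriv (deriv (crad n F)) r) - ((n - 1)/r) * deriv (crad n F) r = _
    rw [deriv2_crad n hF hr0, deriv_crad n hF hr0]
  rw [e0, hAFW, deriv2_Afn n hF (hu y) hr0, deriv_A1 n hF (hu y) hr0,
    deriv_Afn n hF (hu y) hr0, hlin, hAFsimp (Lap n ΔY u) r y hLdiff, hLd, hLr, hSec,
    hLR, deriv_C1 n hF hr0]
  simp only [A1, C1]
  field_simp
  ring
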